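/- arXiv:1605.07046 — 2 statements merged into one kernel-verified Lean document; each statement's English description precedes it below -/
import Mathlib

section
/- For each window w_r, each 0 ≤ m ≤ N/L−1, (L/N) Σ_{m'=0}^{N/L−1} Z(w_r, m') e^{−2πi m m' L / N} = Σ_{j'=0}^{L−1} α(m + j'N/L) β_r(m + j'N/L), where α and β_r are the discrete Fourier coefficients of |x|² and |w_r|² respectively. -/
/-- Multiple-window short-time Fourier transform. -/
noncomputable def stft {N : ℕ} [NeZero N] (L : ℕ) (x w : ZMod N → ℂ) (m k : ℕ) : ℂ :=
  (N : ℂ)⁻¹ * ∑ n : ZMod N, x n * w (((L * m : ℕ) : ZMod N) - n) *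
    Complex.exp (-(2 * Real.pi * Complex.I * (k : ℂ) * (n.val : ℂ)) / (N : ℂ))

/-- DFT of the squared magnitudes of a vector: `(1/N) ∑_n |u(n)|² e^{-2πikn/N}`. -/
noncomputable def dftSq {N : ℕ} [NeZero N] (u : ZMod N → ℂ) (k : ℕ) : ℂ :=
  (N : ℂ)⁻¹ * ∑ n : ZMod N, (‖u n‖ ^ 2 : ℝ) *
    Complex.exp (-(2 * Real.pi * Complex.I * (k : ℂ) * (n.val : ℂ)) / (N : ℂ))
/-!
The energy `Z(w, m')` is, by Parseval, `N⁻¹` times the cyclic convolution `C = |x|² ⋆ |w|²`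
evaluated at `L m'`, while `α β = N⁻² 𝓕 C` by the convolution theorem. Summing `𝓕 C` over the
coset `m + (N / L) ℤ` annihilates `C` off the multiples of `L` (a discrete Poisson summation), which
leaves exactly the samples `C (L m')` weighted by the phases on the left-hand side.
-/

open Complex Finset ZMod ComplexConjugate

namespace ZMod

variable {N : ℕ} [NeZero N]

lemma exp_neg_two_pi_I_mul_div_eq_stdAddChar (a : ℕ) :
    Complex.exp (-(2 * Real.pi * I * a) / N) = stdAddChar (-(a : ZMod N)) := by
  have h := stdAddChar_coe (N := N) (-(a : ℤ))
  push_cast at h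
  rw [h]
  ring_nf

lemma exp_neg_two_pi_I_mul_val_div_eq_stdAddChar (k : ℕ) (n : ZMod N) :
    Complex.exp (-(2 * Real.pi * I * k * n.val) / N) = stdAddChar (-(n * (k : ZMod N))) := by
  have h := exp_neg_two_pi_I_mul_div_eq_stdAddChar (N := N) (k * n.val)
  push_cast at h
  rw [mul_assoc _ (k : ℂ), h, mul_comm, natCast_zmod_val]

lemma sum_range_natCast_eq_sum {M : Type*} [AddCommMonoid M] (f : ZMod N → M) :
    ∑ k ∈ range N, f k = ∑ k, f k :=
  sum_nbij' (↑) ZMod.val (by simp) (by simp [ZMod.val_lt])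
    (fun k hk => ZMod.val_cast_of_lt (mem_range.1 hk)) (by simp) (by simp)

lemma sum_stdAddChar_mul (b : ZMod N) :
    ∑ k, stdAddChar (k * b) = if b = 0 then (N : ℂ) else 0 := by
  rw [AddChar.sum_mulShift b (isPrimitive_stdAddChar N), ZMod.card]
  split_ifs <;> simp

lemma sum_norm_sq_dft (Φ : ZMod N → ℂ) : ∑ k, ‖𝓕 Φ k‖ ^ 2 = N * ∑ j, ‖Φ j‖ ^ 2 := by
  apply Complex.ofReal_injective
  push_cast
  calc ∑ k, (‖𝓕 Φ k‖ : ℂ) ^ 2 = ∑ k, 𝓕 Φ k * conj (𝓕 Φ k) := by simp_rw [Complex.mul_conj']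
    _ = ∑ j, ∑ j', Φ j * conj (Φ j') * ∑ k, stdAddChar (k * (j' - j)) := by
      simp_rw [dft_apply, map_sum, sum_mul_sum, smul_eq_mul, map_mul, ← AddChar.map_neg_eq_conj,
        mul_sum]
      rw [sum_comm]
      refine sum_congr rfl fun j _ => ?_
      rw [sum_comm]
      refine sum_congr rfl fun j' _ => sum_congr rfl fun k _ => ?_
      rw [mul_sub, sub_eq_neg_add, AddChar.map_add_eq_mul]
      ring_nf
    _ = N * ∑ j, (‖Φ j‖ : ℂ) ^ 2 := by
      simp_rw [sum_stdAddChar_mul, sub_eq_zero, mul_ite, mul_zero, sum_ite_eq', mem_univ, if_true,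
        mul_sum, Complex.mul_conj']
      refine sum_congr rfl fun j _ => by ring

noncomputable def cyclicConv (f g : ZMod N → ℂ) (s : ZMod N) : ℂ := ∑ n, f n * g (s - n)

lemma dft_cyclicConv (f g : ZMod N → ℂ) (k : ZMod N) :
    𝓕 (cyclicConv f g) k = 𝓕 f k * 𝓕 g k := by
  simp_rw [dft_apply, cyclicConv, smul_eq_mul, sum_mul_sum, mul_sum]
  rw [sum_comm]
  refine sum_congr rfl fun a _ => ?_
  rw [← Equiv.sum_comp (Equiv.addLeft a)]
  refine sum_congr rfl fun b _ => ?_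
  simp only [Equiv.coe_addLeft, add_sub_cancel_left, add_mul, neg_add, AddChar.map_add_eq_mul]
  ring

lemma sum_range_stdAddChar_neg_mul_div {L : ℕ} (hdvd : L ∣ N) (s : ZMod N) :
    ∑ j ∈ range L, stdAddChar (-(s * ((j * (N / L) : ℕ) : ZMod N))) =
      if L ∣ s.val then (L : ℂ) else 0 := by
  have hpos : 0 < N / L :=
    Nat.div_pos (Nat.le_of_dvd (NeZero.pos N) hdvd) (Nat.pos_of_dvd_of_pos hdvd (NeZero.pos N))
  set ζ := stdAddChar (-(s * ((N / L : ℕ) : ZMod N)))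
  have hpow (j : ℕ) : stdAddChar (-(s * ((j * (N / L) : ℕ) : ZMod N))) = ζ ^ j := by
    rw [← AddChar.map_nsmul_eq_pow, nsmul_eq_mul]
    push_cast
    ring_nf
  have hζL : ζ ^ L = 1 := by
    rw [← hpow, Nat.mul_div_cancel' hdvd, ZMod.natCast_self, mul_zero, neg_zero,
      AddChar.map_zero_eq_one]
  have hζ : ζ = 1 ↔ L ∣ s.val :=
    calc ζ = 1 ↔ s * ((N / L : ℕ) : ZMod N) = 0 := by
          rw [← AddChar.map_zero_eq_one (stdAddChar (N := N)), injective_stdAddChar.eq_iff,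
            neg_eq_zero]
      _ ↔ N ∣ s.val * (N / L) := by
          conv_lhs => rw [← natCast_zmod_val s, ← Nat.cast_mul]
          exact natCast_eq_zero_iff _ _
      _ ↔ L ∣ s.val := by
          rw [← Nat.mul_dvd_mul_iff_right hpos (a := L), Nat.mul_div_cancel' hdvd]
  simp_rw [hpow]
  split_ifs with h
  · simp [hζ.2 h]
  · rw [geom_sum_eq (mt hζ.1 h), hζL, sub_self, zero_div]

lemma sum_filter_dvd_val_eq_sum_range {M : Type*} [AddCommMonoid M] {L : ℕ} (hdvd : L ∣ N)
    (F : ZMod N → M) :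
    ∑ s ∈ univ.filter (fun s : ZMod N => L ∣ s.val), F s =
      ∑ m ∈ range (N / L), F ((L * m : ℕ) : ZMod N) := by
  have hL : 0 < L := Nat.pos_of_dvd_of_pos hdvd (NeZero.pos N)
  have hlt {m : ℕ} (hm : m ∈ range (N / L)) : L * m < N := by
    rw [mem_range] at hm
    exact ((Nat.mul_lt_mul_left hL).2 hm).trans_eq (Nat.mul_div_cancel' hdvd)
  have hval {m : ℕ} (hm : m ∈ range (N / L)) : ((L * m : ℕ) : ZMod N).val = L * m :=
    ZMod.val_cast_of_lt (hlt hm)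
  symm
  refine sum_nbij' (fun m => ((L * m : ℕ) : ZMod N)) (fun s => s.val / L) ?_ ?_ ?_ ?_ ?_
  · intro m hm
    rw [mem_filter, hval hm]
    exact ⟨mem_univ _, dvd_mul_right L m⟩
  · intro s _
    exact mem_range.2 (Nat.div_lt_div_of_lt_of_dvd hdvd (ZMod.val_lt s))
  · intro m hm
    simp only [hval hm]
    exact Nat.mul_div_cancel_left m hL
  · intro s hs
    simp [Nat.mul_div_cancel' (mem_filter.1 hs).2]
  · intro m _
    rfl

lemma sum_range_dft_add_mul_div {L : ℕ} (hdvd : L ∣ N) (Φ : ZMod N → ℂ) (m : ℕ) :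
    ∑ j ∈ range L, 𝓕 Φ ((m + j * (N / L) : ℕ) : ZMod N) =
      L * ∑ m' ∈ range (N / L),
        stdAddChar (-(((L * m' : ℕ) : ZMod N) * (m : ZMod N))) * Φ ((L * m' : ℕ) : ZMod N) := by
  calc ∑ j ∈ range L, 𝓕 Φ ((m + j * (N / L) : ℕ) : ZMod N)
      = ∑ s, stdAddChar (-(s * (m : ZMod N))) * Φ s *
          ∑ j ∈ range L, stdAddChar (-(s * ((j * (N / L) : ℕ) : ZMod N))) := by
        simp_rw [dft_apply, smul_eq_mul, mul_sum]
        rw [sum_comm]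
        refine sum_congr rfl fun s _ => sum_congr rfl fun j _ => ?_
        rw [Nat.cast_add, mul_add, neg_add, AddChar.map_add_eq_mul]
        ring
    _ = L * ∑ s ∈ univ.filter (fun s : ZMod N => L ∣ s.val),
          stdAddChar (-(s * (m : ZMod N))) * Φ s := by
        simp_rw [sum_range_stdAddChar_neg_mul_div hdvd, sum_filter, mul_sum, mul_ite, mul_zero]
        refine sum_congr rfl fun s _ => by split_ifs <;> ring
    _ = _ := by rw [sum_filter_dvd_val_eq_sum_range hdvd]

end ZMod

section

variable {N : ℕ} [NeZero N]

lemma stft_eq_dft (L : ℕ) (x w : ZMod N → ℂ) (m k : ℕ) :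
    stft L x w m k = (N : ℂ)⁻¹ * 𝓕 (fun n => x n * w (((L * m : ℕ) : ZMod N) - n)) k := by
  simp_rw [stft, dft_apply, exp_neg_two_pi_I_mul_val_div_eq_stdAddChar, smul_eq_mul, mul_comm]

lemma dftSq_eq_dft (u : ZMod N → ℂ) (k : ℕ) :
    dftSq u k = (N : ℂ)⁻¹ * 𝓕 (fun n => ((‖u n‖ ^ 2 : ℝ) : ℂ)) k := by
  simp_rw [dftSq, dft_apply, exp_neg_two_pi_I_mul_val_div_eq_stdAddChar, smul_eq_mul, mul_comm]

lemma sum_norm_sq_stft (L : ℕ) (x w : ZMod N → ℂ) (m : ℕ) :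
    ((∑ k ∈ range N, ‖stft L x w m k‖ ^ 2 : ℝ) : ℂ) =
      (N : ℂ)⁻¹ * cyclicConv (fun n => ((‖x n‖ ^ 2 : ℝ) : ℂ)) (fun n => ((‖w n‖ ^ 2 : ℝ) : ℂ))
        ((L * m : ℕ) : ZMod N) := by
  simp_rw [stft_eq_dft, norm_mul, mul_pow]
  rw [← mul_sum, sum_range_natCast_eq_sum (fun k => ‖𝓕 _ k‖ ^ 2), sum_norm_sq_dft]
  simp only [cyclicConv, norm_mul, mul_pow, norm_inv, Complex.norm_natCast]
  push_cast
  field_simp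

end

theorem stmt6_general (N L : ℕ) [NeZero N] (hdvd : L ∣ N)
    (w x : ZMod N → ℂ) (m : ℕ) :
    (L : ℂ) / (N : ℂ) * ∑ m' ∈ Finset.range (N / L),
        ((∑ k ∈ Finset.range N, ‖stft L x w m' k‖ ^ 2 : ℝ) : ℂ) *
          Complex.exp (-(2 * Real.pi * Complex.I * (m : ℂ) * (m' : ℂ) * (L : ℂ)) / (N : ℂ)) =
      ∑ j' ∈ Finset.range L, dftSq x (m + j' * (N / L)) * dftSq w (m + j' * (N / L)) := by
  set C := cyclicConv (fun n => ((‖x n‖ ^ 2 : ℝ) : ℂ)) (fun n => ((‖w n‖ ^ 2 : ℝ) : ℂ))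
  have hexp (m' : ℕ) : Complex.exp (-(2 * Real.pi * I * m * m' * L) / N) =
      stdAddChar (-(((L * m' : ℕ) : ZMod N) * (m : ZMod N))) := by
    rw [show 2 * Real.pi * I * m * m' * L = 2 * Real.pi * I * ((L * m' * m : ℕ) : ℂ) by
        push_cast; ring, exp_neg_two_pi_I_mul_div_eq_stdAddChar, Nat.cast_mul _ m]
  have hdft (k : ℕ) : dftSq x k * dftSq w k = (N : ℂ)⁻¹ ^ 2 * 𝓕 C k := by
    rw [dftSq_eq_dft, dftSq_eq_dft, dft_cyclicConv]
    ring
  simp_rw [sum_norm_sq_stft, hexp, hdft, ← mul_sum, sum_range_dft_add_mul_div hdvd, mul_sum]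
  refine sum_congr rfl fun m' _ => ?_
  ring

/-- `(L/N) ∑_{m'} Z(w, m') e^{-2πi m m' L / N} = ∑_{j'=0}^{L-1} α(m+j'N/L) β(m+j'N/L)`. -/
theorem stmt6 (N L : ℕ) [NeZero N] (hL : 0 < L) (hdvd : L ∣ N)
    (w x : ZMod N → ℂ) (m : ℕ) (hm : m < N / L) :
    (L : ℂ) / (N : ℂ) * ∑ m' ∈ Finset.range (N / L),
        ((∑ k ∈ Finset.range N, ‖stft L x w m' k‖ ^ 2 : ℝ) : ℂ) *
          Complex.exp (-(2 * Real.pi * Complex.I * (m : ℂ) * (m' : ℂ) * (L : ℂ)) / (N : ℂ)) =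
      ∑ j' ∈ Finset.range L, dftSq x (m + j' * (N / L)) * dftSq w (m + j' * (N / L)) :=
  stmt6_general N L hdvd w x m
end

section
/- Let w be an N-periodic window with supporting length l(w) ≤ N/2 and l(w) ≥ 2, supporting interval starting at a(w). Then for any x ∈ ℂ^N and any 0 ≤ m ≤ N/L−1: N Σ_{k=0}^{N−1} |X_w(Lm,k)|² e^{2πik(l(w)−1)/N} = x(n_1) · conj(x(n_2)) · w(a(w)) · conj(w(a(w)+l(w)−1)), where n_1 ≡ Lm − a(w) (mod N) and n_2 ≡ Lm − a(w) − l(w) + 1 (mod N). -/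
open ZMod Finset ComplexConjugate

namespace ZMod

variable {N : ℕ} [NeZero N]

lemma sum_range_natCast {M : Type*} [AddCommMonoid M] (f : ZMod N → M) :
    ∑ k ∈ range N, f k = ∑ j : ZMod N, f j :=
  sum_bij' (fun k _ ↦ (k : ZMod N)) (fun j _ ↦ j.val) (by simp) (by simp [val_lt])
    (fun k hk ↦ val_cast_of_lt (mem_range.mp hk)) (fun j _ ↦ natCast_zmod_val j) (by simp)

/-- Discrete Wiener–Khinchin identity at a single lag. -/
lemma sum_norm_dft_sq_mul_stdAddChar (T : ZMod N → ℂ) (d : ZMod N) :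
    ∑ k : ZMod N, ((‖𝓕 T k‖ ^ 2 : ℝ) : ℂ) * stdAddChar (k * d) =
      N * ∑ n, T (n + d) * conj (T n) := by
  have hsq (k : ZMod N) : ((‖𝓕 T k‖ ^ 2 : ℝ) : ℂ) =
      ∑ n, ∑ n', T n * conj (T n') * stdAddChar (k * (n' - n)) := by
    push_cast
    rw [← Complex.mul_conj', dft_apply, map_sum, sum_mul_sum]
    refine sum_congr rfl fun n _ ↦ sum_congr rfl fun n' _ ↦ ?_
    rw [smul_eq_mul, smul_eq_mul, map_mul, ← AddChar.map_neg_eq_conj, neg_neg, mul_sub,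
      AddChar.map_sub_eq_div, AddChar.map_neg_eq_inv, mul_comm k, mul_comm k]
    ring
  calc ∑ k : ZMod N, ((‖𝓕 T k‖ ^ 2 : ℝ) : ℂ) * stdAddChar (k * d)
      = ∑ n, ∑ n', T n * conj (T n') * ∑ k : ZMod N, stdAddChar (k * (n' + d - n)) := by
        simp_rw [hsq, sum_mul, mul_sum]
        rw [sum_comm]
        refine sum_congr rfl fun n _ ↦ ?_
        rw [sum_comm]
        refine sum_congr rfl fun n' _ ↦ sum_congr rfl fun k _ ↦ ?_
        rw [mul_assoc, ← AddChar.map_add_eq_mul]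
        congr 2
        ring
    _ = N * ∑ n, T (n + d) * conj (T n) := by
        simp_rw [AddChar.sum_mulShift _ (isPrimitive_stdAddChar N), card, sub_eq_zero,
          Nat.cast_ite, Nat.cast_zero, mul_ite, mul_zero]
        rw [sum_comm, mul_sum]
        simp_rw [sum_ite_eq, mem_univ, if_true]
        exact sum_congr rfl fun n _ ↦ mul_comm _ _

lemma stdAddChar_natCast_mul (k j : ℕ) :
    stdAddChar ((k : ZMod N) * (j : ZMod N)) =
      Complex.exp (2 * Real.pi * Complex.I * k * j / N) := by
  simpa [mul_assoc] using stdAddChar_coe (N := N) (k * j : ℤ)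

end ZMod

lemma stft_eq_inv_mul_dft {N : ℕ} [NeZero N] (L : ℕ) (x w : ZMod N → ℂ) (m k : ℕ) :
    stft L x w m k = (N : ℂ)⁻¹ * 𝓕 (fun n ↦ x n * w (((L * m : ℕ) : ZMod N) - n)) k := by
  rw [stft, dft_apply]
  congr 1
  refine sum_congr rfl fun n _ ↦ ?_
  have hexp := stdAddChar_coe (N := N) (-(n.val * k : ℤ))
  push_cast [natCast_zmod_val] at hexp
  rw [smul_eq_mul, hexp]
  ring_nf

lemma eq_of_apply_ne_zero_of_apply_add_ne_zero {N : ℕ} {M : Type*} [Zero M] {w : ZMod N → M}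
    {a : ZMod N} {l : ℕ} (hsupp : ∀ n : ZMod N, (∀ j < l, n ≠ a + (j : ZMod N)) → w n = 0)
    (hlN : 2 * l ≤ N + 1) {u : ZMod N} (hu : w u ≠ 0)
    (hu' : w (u + ((l - 1 : ℕ) : ZMod N)) ≠ 0) : u = a := by
  obtain ⟨j, hj, rfl⟩ : ∃ j < l, u = a + j := by
    by_contra! h
    exact hu (hsupp u h)
  obtain ⟨j', hj', hj'a⟩ : ∃ j' < l, a + j + ((l - 1 : ℕ) : ZMod N) = a + j' := by
    by_contra! h
    exact hu' (hsupp _ h)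
  have hcast : ((j + (l - 1) : ℕ) : ZMod N) = j' := by
    push_cast
    linear_combination hj'a
  rw [ZMod.natCast_eq_natCast_iff', Nat.mod_eq_of_lt (by omega), Nat.mod_eq_of_lt (by omega)]
    at hcast
  obtain rfl : j = 0 := by omega
  simp

lemma sum_windowed_mul_conj_lag_eq {N : ℕ} [NeZero N] {w : ZMod N → ℂ} {a : ZMod N} {l : ℕ}
    (hsupp : ∀ n : ZMod N, (∀ j < l, n ≠ a + (j : ZMod N)) → w n = 0) (hlN : 2 * l ≤ N + 1)
    (x : ZMod N → ℂ) (c : ZMod N) :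
    ∑ n, x (n + ((l - 1 : ℕ) : ZMod N)) * w (c - (n + ((l - 1 : ℕ) : ZMod N))) *
        conj (x n * w (c - n)) =
      x (c - a) * conj (x (c - a - ((l - 1 : ℕ) : ZMod N))) * w a *
        conj (w (a + ((l - 1 : ℕ) : ZMod N))) := by
  set d : ZMod N := ((l - 1 : ℕ) : ZMod N)
  rw [sum_eq_single (c - a - d)]
  · rw [map_mul, show c - a - d + d = c - a by ring, show c - (c - a) = a by ring,
      show c - (c - a - d) = a + d by ring]
    ring
  · intro n _ hn
    have hshift : c - n = c - (n + d) + d := by ring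
    by_cases hu : w (c - (n + d)) = 0
    · simp [hu]
    by_cases hu' : w (c - n) = 0
    · simp [hu']
    rw [hshift] at hu'
    have := eq_of_apply_ne_zero_of_apply_add_ne_zero hsupp hlN hu hu'
    exact absurd (by linear_combination -this) hn
  · simp

theorem stmt9_general (N L : ℕ) [NeZero N]
    (w : ZMod N → ℂ) (a : ZMod N) (l : ℕ)
    (hlN : l ≤ N / 2)
    (hsupp : ∀ n : ZMod N, (∀ j < l, n ≠ a + (j : ZMod N)) → w n = 0)
    (x : ZMod N → ℂ) (m : ℕ) :
    (N : ℂ) * ∑ k ∈ Finset.range N, ((‖stft L x w m k‖ ^ 2 : ℝ) : ℂ) *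
        Complex.exp (2 * Real.pi * Complex.I * (k : ℂ) * ((l - 1 : ℕ) : ℂ) / (N : ℂ)) =
      x (((L * m : ℕ) : ZMod N) - a) *
        (starRingEnd ℂ) (x (((L * m : ℕ) : ZMod N) - a - ((l - 1 : ℕ) : ZMod N))) *
        w a * (starRingEnd ℂ) (w (a + ((l - 1 : ℕ) : ZMod N))) := by
  simp_rw [stft_eq_inv_mul_dft, ← stdAddChar_natCast_mul]
  set T : ZMod N → ℂ := fun n ↦ x n * w (((L * m : ℕ) : ZMod N) - n)
  set d : ZMod N := ((l - 1 : ℕ) : ZMod N)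
  calc _ = N * ((N : ℂ)⁻¹ ^ 2 * ∑ k, ((‖𝓕 T k‖ ^ 2 : ℝ) : ℂ) * stdAddChar (k * d)) := by
        congr 1
        rw [sum_range_natCast (fun k ↦ ((‖(N : ℂ)⁻¹ * 𝓕 T k‖ ^ 2 : ℝ) : ℂ) * stdAddChar (k * d)),
          mul_sum]
        refine sum_congr rfl fun k _ ↦ ?_
        rw [norm_mul, mul_pow, norm_inv, Complex.norm_natCast]
        push_cast
        ring
    _ = ∑ n, T (n + d) * conj (T n) := by
        have hN : (N : ℂ) ≠ 0 := NeZero.ne _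
        rw [sum_norm_dft_sq_mul_stdAddChar]
        field_simp
    _ = _ := sum_windowed_mul_conj_lag_eq hsupp (by omega) x _

/-- `N ∑_k |X_w(Lm,k)|² e^{2πik(l-1)/N} = x(n₁) conj(x(n₂)) w(a) conj(w(a+l-1))` where
`n₁ ≡ Lm - a` and `n₂ ≡ Lm - a - l + 1 (mod N)`. -/
theorem stmt9 (N L : ℕ) [NeZero N] (hL : 0 < L) (hdvd : L ∣ N)
    (w : ZMod N → ℂ) (a : ZMod N) (l : ℕ)
    (hl2 : 2 ≤ l) (hlN : l ≤ N / 2)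
    (ha : w a ≠ 0) (hb : w (a + ((l - 1 : ℕ) : ZMod N)) ≠ 0)
    (hsupp : ∀ n : ZMod N, (∀ j < l, n ≠ a + (j : ZMod N)) → w n = 0)
    (x : ZMod N → ℂ) (m : ℕ) (hm : m < N / L) :
    (N : ℂ) * ∑ k ∈ Finset.range N, ((‖stft L x w m k‖ ^ 2 : ℝ) : ℂ) *
        Complex.exp (2 * Real.pi * Complex.I * (k : ℂ) * ((l - 1 : ℕ) : ℂ) / (N : ℂ)) =
      x (((L * m : ℕ) : ZMod N) - a) *
        (starRingEnd ℂ) (x (((L * m : ℕ) : ZMod N) - a - ((l - 1 : ℕ) : ZMod N))) *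
        w a * (starRingEnd ℂ) (w (a + ((l - 1 : ℕ) : ZMod N))) :=
  stmt9_general N L w a l hlN hsupp x m
end
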